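/- Let G be a digraph. Then Ω₃(G) admits a K-basis every element of which is of the form f_*(τ_m) for some integer m ≥ 2 and some digraph map f : T_m → G. -/

import Mathlib

open scoped BigOperators
open Classical

/-- A digraph: an irreflexive relation on a vertex type. -/
structure Dgraph (V : Type*) where
  Adj : V → V → Prop
  loopless : ∀ v : V, ¬ Adj v v

/-- An elementary `p`-path on the vertex type `V`: a sequence of `p+1` vertices. -/
abbrev EPath (V : Type*) (p : ℕ) := Fin (p + 1) → V

/-- A path is regular if consecutive vertices are distinct. -/
def IsRegularPath {V : Type*} {p : ℕ} (f : EPath V p) : Prop :=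
  ∀ k : Fin p, f k.castSucc ≠ f k.succ

/-- A path is allowed if consecutive vertices are joined by an arrow. -/
def IsAllowedPath {V : Type*} (G : Dgraph V) {p : ℕ} (f : EPath V p) : Prop :=
  ∀ k : Fin p, G.Adj (f k.castSucc) (f k.succ)

/-- The projection of `Λ_p` onto its regular part; this realizes `R_p = Λ_p / I_p`
as the subspace of `Λ_p` spanned by the regular elementary paths. -/
noncomputable def regProj (K : Type*) [Field K] (V : Type*) (p : ℕ) :
    (EPath V p →₀ K) →ₗ[K] (EPath V p →₀ K) :=
  Finsupp.linearCombination K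
    (fun f : EPath V p => if IsRegularPath f then Finsupp.single f (1 : K) else 0)

/-- The (non-reduced) boundary operator on `Λ`. -/
noncomputable def bdryFull (K : Type*) [Field K] (V : Type*) (p : ℕ) :
    (EPath V (p + 1) →₀ K) →ₗ[K] (EPath V p →₀ K) :=
  Finsupp.linearCombination K
    (fun f : EPath V (p + 1) =>
      ∑ q : Fin (p + 2), ((-1 : K) ^ (q : ℕ)) • Finsupp.single (f ∘ q.succAbove) (1 : K))

/-- The boundary operator `∂` on the regular part (i.e. on `R`). -/
noncomputable def bdry (K : Type*) [Field K] (V : Type*) (p : ℕ) :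
    (EPath V (p + 1) →₀ K) →ₗ[K] (EPath V p →₀ K) :=
  (regProj K V p).comp (bdryFull K V p)

/-- The span of the regular elementary paths: the realization of `R_p` inside `Λ_p`. -/
noncomputable def regularMod (K : Type*) [Field K] (V : Type*) (p : ℕ) :
    Submodule K (EPath V p →₀ K) :=
  Submodule.span K {x | ∃ f : EPath V p, IsRegularPath f ∧ x = Finsupp.single f (1 : K)}

/-- `A_p(G)`: the span of the allowed elementary paths. -/
noncomputable def allowedMod (K : Type*) [Field K] (V : Type*) (G : Dgraph V) (p : ℕ) :
    Submodule K (EPath V p →₀ K) :=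
  Submodule.span K {x | ∃ f : EPath V p, IsAllowedPath G f ∧ x = Finsupp.single f (1 : K)}

/-- `Ω_p(G)`: the space of ∂-invariant `p`-paths. -/
noncomputable def Omega (K : Type*) [Field K] (V : Type*) (G : Dgraph V) :
    (p : ℕ) → Submodule K (EPath V p →₀ K)
  | 0 => allowedMod K V G 0
  | (p + 1) => allowedMod K V G (p + 1) ⊓ (allowedMod K V G p).comap (bdry K V p)

/-- An `(a,b)`-cluster: every elementary path occurring with nonzero coefficient
starts at `a` and ends at `b`. -/
def IsCluster {K : Type*} [Field K] {V : Type*} {p : ℕ} (a b : V) (ω : EPath V p →₀ K) : Prop :=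
  ∀ f ∈ ω.support, f 0 = a ∧ f (Fin.last p) = b

/-- A minimal ∂-invariant path: a nonzero element of `Ω_p` such that no nonzero
∂-invariant path is supported on a proper (nonempty) subset of its support. -/
def IsMinimal (K : Type*) [Field K] {V : Type*} (G : Dgraph V) (p : ℕ)
    (ω : EPath V p →₀ K) : Prop :=
  ω ∈ Omega K V G p ∧ ω ≠ 0 ∧
    ∀ ω' : EPath V p →₀ K, ω' ∈ Omega K V G p → ω' ≠ 0 → ¬ (ω'.support ⊂ ω.support)

/-- A digraph map: every arrow goes to an arrow or collapses to a vertex. -/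
structure DgraphMap {V W : Type*} (X : Dgraph V) (Y : Dgraph W) where
  toFun : V → W
  map_adj : ∀ ⦃u v : V⦄, X.Adj u v → Y.Adj (toFun u) (toFun v) ∨ toFun u = toFun v

/-- The induced map `f_* : R_n(X) → R_n(Y)` (in the regular-part realization):
push forward elementary paths and kill the irregular ones. -/
noncomputable def inducedMap (K : Type*) [Field K] {V W : Type*} (φ : V → W) (p : ℕ) :
    (EPath V p →₀ K) →ₗ[K] (EPath W p →₀ K) :=
  (regProj K W p).comp (Finsupp.lmapDomain K K (fun f : EPath V p => φ ∘ f))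

/-- Cyclic successor on `Fin m`. -/
def finRot {m : ℕ} (k : Fin m) : Fin m := ⟨((k : ℕ) + 1) % m, Nat.mod_lt _ k.pos⟩

/-- The vertices of the trapezohedron `T_m`. -/
inductive TVert (m : ℕ) : Type
  | a : TVert m
  | b : TVert m
  | vi : Fin m → TVert m
  | vj : Fin m → TVert m

/-- The adjacency relation of the trapezohedron `T_m`:
`a → i_k`, `i_k → j_k`, `i_{k+1} → j_k`, `j_k → b` (indices mod `m`). -/
def TrapAdj (m : ℕ) : TVert m → TVert m → Prop
  | TVert.a, TVert.vi _ => True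
  | TVert.vi k, TVert.vj l => k = l ∨ k = finRot l
  | TVert.vj _, TVert.b => True
  | _, _ => False

/-- The trapezohedron digraph `T_m`. -/
def Trap (m : ℕ) : Dgraph (TVert m) where
  Adj := TrapAdj m
  loopless := by intro v h; cases v <;> exact h

/-- The trapezohedral path `τ_m`. -/
noncomputable def tau (K : Type*) [Field K] (m : ℕ) : EPath (TVert m) 3 →₀ K :=
  ∑ k : Fin m,
    (Finsupp.single ![TVert.a, TVert.vi k, TVert.vj k, TVert.b] (1 : K)
      - Finsupp.single ![TVert.a, TVert.vi (finRot k), TVert.vj k, TVert.b] (1 : K))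

/-- The submodule of `(a,b)`-clusters. -/
def clusterMod (K : Type*) [Field K] (V : Type*) (p : ℕ) (a b : V) :
    Submodule K (EPath V p →₀ K) where
  carrier := {ω | ∀ f ∈ ω.support, f 0 = a ∧ f (Fin.last p) = b}
  add_mem' := by
    intro x y hx hy f hf
    rcases Finset.mem_union.mp (Finsupp.support_add hf) with h | h
    exacts [hx f h, hy f h]
  zero_mem' := by intro f hf; simp at hf
  smul_mem' := by
    intro c x hx f hf
    exact hx f (Finsupp.support_smul hf)

/-- `Ω₃^{(a,b)}(G)`: the ∂-invariant `(a,b)`-clusters. -/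
noncomputable def OmegaAB (K : Type*) [Field K] (V : Type*) (G : Dgraph V) (a b : V) :
    Submodule K (EPath V 3 →₀ K) :=
  Omega K V G 3 ⊓ clusterMod K V 3 a b

/-- Out-neighbourhood. -/
def Nplus {V : Type*} (G : Dgraph V) (v : V) : Set V := {w | G.Adj v w}

/-- In-neighbourhood. -/
def Nminus {V : Type*} (G : Dgraph V) (v : V) : Set V := {w | G.Adj w v}

/-- `E(X,Y)`: the edges of `G` starting in `X` and ending in `Y`. -/
def Ebetween {V : Type*} (G : Dgraph V) (X Y : Set V) : Set (V × V) :=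
  {p | p.1 ∈ X ∧ p.2 ∈ Y ∧ G.Adj p.1 p.2}

/-- `A = N⁺(a) \ {b}`. -/
def setA {V : Type*} (G : Dgraph V) (a b : V) : Set V := Nplus G a \ {b}

/-- `B = N⁻(b) \ {a}`. -/
def setB {V : Type*} (G : Dgraph V) (a b : V) : Set V := Nminus G b \ {a}

/-- The vertex set of `H = Ind(A \ B, B \ A)`. -/
def Hverts {V : Type*} (G : Dgraph V) (a b : V) : Set V :=
  (setA G a b \ setB G a b) ∪ (setB G a b \ setA G a b)

/-- `H = Ind(A \ B, B \ A)` regarded as an undirected (simple) graph on its vertex set. -/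
def Hgraph {V : Type*} (G : Dgraph V) (a b : V) : SimpleGraph (Hverts G a b) where
  Adj u v :=
    ((u : V) ∈ setA G a b \ setB G a b ∧ (v : V) ∈ setB G a b \ setA G a b ∧ G.Adj u v)
      ∨ ((v : V) ∈ setA G a b \ setB G a b ∧ (u : V) ∈ setB G a b \ setA G a b ∧ G.Adj v u)
  symm := ⟨by intro u v h; exact h.symm⟩
  loopless := ⟨by
    intro u h
    rcases h with ⟨_, _, h3⟩ | ⟨_, _, h3⟩ <;> exact G.loopless _ h3⟩

/-- The set of vertices of `G` belonging to the connected component `c` of `H`. -/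
def compVerts {V : Type*} (G : Dgraph V) (a b : V)
    (c : (Hgraph G a b).ConnectedComponent) : Set V :=
  {v | ∃ h : v ∈ Hverts G a b, (Hgraph G a b).connectedComponentMk ⟨v, h⟩ = c}

/-- The set `S_k` associated to a connected component of `H`. -/
def Sset {V : Type*} (G : Dgraph V) (a b : V)
    (c : (Hgraph G a b).ConnectedComponent) : Set (V × V) :=
  Ebetween G (compVerts G a b c ∩ (setA G a b \ setB G a b))
      ((Nplus G a ∪ {a}) ∩ Nminus G b)
    ∪ Ebetween G (Nplus G a ∩ (Nminus G b ∪ {b}))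
      (compVerts G a b c ∩ (setB G a b \ setA G a b))

/-!
Let `ω ∈ Ω₃` be nonzero and let `A u v B` occur in `ω`. The pairs `(x, y)` such that `A x y B`
occurs in `ω` are the edges of a finite bipartite graph. The coefficient in `∂ω` of the path
`A x B` is a row sum of this graph when `x ↛ B`, and a column sum when `A ↛ x`; as such a path is
not allowed, ∂-invariance makes these sums vanish, so every vertex that is not free (a row `x`
with `x ↛ B`, `x ≠ B`, or a column `y` with `A ↛ y`, `A ≠ y`) has degree `0` or at least `2`.
Hence the graph contains a cycle, or a path whose two ends are free. Running the trapezohedron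
around such a cycle, and closing up such a path by collapsing the missing edges onto `A` or `B`,
gives a digraph map `f : T_m → G` for which `f_*(τ_m)` is nonzero and supported in the support
of `ω`. Subtracting a multiple of it shrinks the support, so the paths `f_*(τ_m)` span `Ω₃`, and
a basis can be extracted from them.
-/

open Finsupp

section PathSpaces

variable {K : Type*} [Field K] {V W : Type*}

lemma IsAllowedPath.isRegularPath {G : Dgraph V} {p : ℕ} {f : EPath V p}
    (h : IsAllowedPath G f) : IsRegularPath f :=
  fun k e => G.loopless _ (e ▸ h k)

@[simp] lemma isRegularPath_vec3 (a b c : V) :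
    IsRegularPath (![a, b, c] : EPath V 2) ↔ a ≠ b ∧ b ≠ c := by
  simp [IsRegularPath, Fin.forall_fin_succ]

@[simp] lemma isRegularPath_vec4 (a b c d : V) :
    IsRegularPath (![a, b, c, d] : EPath V 3) ↔ a ≠ b ∧ b ≠ c ∧ c ≠ d := by
  simp [IsRegularPath, Fin.forall_fin_succ]

@[simp] lemma isAllowedPath_vec3 (G : Dgraph V) (a b c : V) :
    IsAllowedPath G (![a, b, c] : EPath V 2) ↔ G.Adj a b ∧ G.Adj b c := by
  simp [IsAllowedPath, Fin.forall_fin_succ]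

@[simp] lemma isAllowedPath_vec4 (G : Dgraph V) (a b c d : V) :
    IsAllowedPath G (![a, b, c, d] : EPath V 3) ↔ G.Adj a b ∧ G.Adj b c ∧ G.Adj c d := by
  simp [IsAllowedPath, Fin.forall_fin_succ]

lemma epath3_eq_vec (f : EPath V 3) : f = ![f 0, f 1, f 2, f 3] := by
  ext i; fin_cases i <;> rfl

lemma regProj_eq_filter {p : ℕ} (u : EPath V p →₀ K) :
    regProj K V p u = u.filter IsRegularPath := by
  induction u using Finsupp.induction_linear with
  | zero => rw [map_zero, filter_zero]
  | add f g hf hg => rw [map_add, hf, hg, filter_add]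
  | single f c =>
    rw [regProj, linearCombination_single]
    split_ifs with h
    · rw [filter_single_of_pos _ h, smul_single_one]
    · rw [filter_single_of_neg _ h, smul_zero]

lemma regProj_single {p : ℕ} (f : EPath V p) (c : K) :
    regProj K V p (single f c) = if IsRegularPath f then single f c else 0 := by
  rw [regProj_eq_filter]
  split_ifs with h
  exacts [filter_single_of_pos _ h, filter_single_of_neg _ h]

lemma allowedMod_eq_supported (G : Dgraph V) (p : ℕ) :
    allowedMod K V G p = supported K K {f | IsAllowedPath G f} := by
  rw [supported_eq_span_single, allowedMod]
  congr 1
  ext x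
  simp [eq_comm]

lemma mem_allowedMod_iff {G : Dgraph V} {p : ℕ} {ω : EPath V p →₀ K} :
    ω ∈ allowedMod K V G p ↔ ∀ f ∈ ω.support, IsAllowedPath G f := by
  rw [allowedMod_eq_supported, mem_supported]
  rfl

lemma inducedMap_eq (φ : V → W) {p : ℕ} (u : EPath V p →₀ K) :
    inducedMap K φ p u = (u.mapDomain (φ ∘ ·)).filter IsRegularPath := by
  rw [inducedMap, LinearMap.comp_apply, regProj_eq_filter, lmapDomain_apply]

lemma inducedMap_mem_allowedMod {X : Dgraph V} {Y : Dgraph W} (f : DgraphMap X Y) {p : ℕ}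
    {u : EPath V p →₀ K} (hu : u ∈ allowedMod K V X p) :
    inducedMap K f.toFun p u ∈ allowedMod K W Y p := by
  rw [mem_allowedMod_iff] at hu ⊢
  intro g hg
  rw [inducedMap_eq, support_filter, Finset.mem_filter] at hg
  obtain ⟨g', hg', rfl⟩ := Finset.mem_image.mp (mapDomain_support hg.1)
  exact fun k => (f.map_adj (hu g' hg' k)).resolve_right (hg.2 k)

lemma inducedMap_regProj (φ : V → W) {p : ℕ} (u : EPath V p →₀ K) :
    inducedMap K φ p (regProj K V p u) = inducedMap K φ p u := by
  induction u using Finsupp.induction_linear with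
  | zero => rfl
  | add f g hf hg => rw [map_add, map_add, hf, hg, map_add]
  | single f c =>
    rw [regProj_single]
    split_ifs with h
    · rfl
    · rw [map_zero, inducedMap_eq, mapDomain_single, filter_single_of_neg]
      simp only [IsRegularPath, not_forall, not_not] at h ⊢
      obtain ⟨k, hk⟩ := h
      exact ⟨k, congrArg φ hk⟩

lemma mapDomain_bdryFull (φ : V → W) {p : ℕ} (u : EPath V (p + 1) →₀ K) :
    (bdryFull K V p u).mapDomain (φ ∘ ·) = bdryFull K W p (u.mapDomain (φ ∘ ·)) := by
  induction u using Finsupp.induction_linear with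
  | zero => simp
  | add f g hf hg => rw [map_add, mapDomain_add, hf, hg, mapDomain_add, map_add]
  | single f c =>
    simp [bdryFull, linearCombination_single, mapDomain_finsetSum, mapDomain_smul,
      mapDomain_single, Function.comp_assoc]

end PathSpaces

section ThreePaths

variable {K : Type*} [Field K] {V W : Type*}

lemma bdryFull_single_three (f : EPath V 3) :
    bdryFull K V 2 (single f 1) =
      single ![f 1, f 2, f 3] 1 - single ![f 0, f 2, f 3] 1
        + single ![f 0, f 1, f 3] 1 - single ![f 0, f 1, f 2] 1 := by
  have h0 : f ∘ (0 : Fin 4).succAbove = ![f 1, f 2, f 3] := by ext i; fin_cases i <;> rfl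
  have h1 : f ∘ (1 : Fin 4).succAbove = ![f 0, f 2, f 3] := by ext i; fin_cases i <;> rfl
  have h2 : f ∘ (2 : Fin 4).succAbove = ![f 0, f 1, f 3] := by ext i; fin_cases i <;> rfl
  have h3 : f ∘ (3 : Fin 4).succAbove = ![f 0, f 1, f 2] := by ext i; fin_cases i <;> rfl
  rw [bdryFull, linearCombination_single, one_smul, Fin.sum_univ_four, h0, h1, h2, h3]
  norm_num [sub_eq_add_neg, add_assoc]

lemma bdry_single_eq_zero {f : EPath V 3} (h : ¬ IsRegularPath f) :
    bdry K V 2 (single f 1) = 0 := by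
  rw [epath3_eq_vec f, isRegularPath_vec4] at h
  simp only [not_and_or, not_not] at h
  rw [bdry, LinearMap.comp_apply, bdryFull_single_three]
  -- the two faces omitting one of the repeated vertices cancel, the other two are irregular
  rcases h with h | h | h <;> simp [h, regProj_single]

lemma bdry_regProj (u : EPath V 3 →₀ K) : bdry K V 2 (regProj K V 3 u) = bdry K V 2 u := by
  induction u using Finsupp.induction_linear with
  | zero => rfl
  | add f g hf hg => rw [map_add, map_add, hf, hg, map_add]
  | single f c =>
    rw [regProj_single]
    split_ifs with h
    · rfl
    · rw [← smul_single_one, map_smul, bdry_single_eq_zero h, smul_zero, map_zero]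

lemma bdry_inducedMap (φ : V → W) (u : EPath V 3 →₀ K) :
    bdry K W 2 (inducedMap K φ 3 u) = inducedMap K φ 2 (bdry K V 2 u) := by
  calc bdry K W 2 (inducedMap K φ 3 u)
      = regProj K W 2 (bdryFull K W 2 (u.mapDomain (φ ∘ ·))) := by
        rw [inducedMap, LinearMap.comp_apply, bdry_regProj, bdry, LinearMap.comp_apply,
          lmapDomain_apply]
    _ = inducedMap K φ 2 (regProj K V 2 (bdryFull K V 2 u)) := by
        rw [inducedMap_regProj, inducedMap, LinearMap.comp_apply, lmapDomain_apply,
          mapDomain_bdryFull]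

end ThreePaths

section Trapezohedron

variable {K : Type*} [Field K] {V : Type*}

lemma finRot_eq_finRotate (m : ℕ) : finRot (m := m) = finRotate m := by
  cases m with
  | zero => funext k; exact k.elim0
  | succ n => funext k; ext; simp [finRot, Fin.val_add]

lemma val_finRot {m : ℕ} (k : Fin m) :
    (finRot k : ℕ) = if (k : ℕ) + 1 = m then 0 else (k : ℕ) + 1 := by
  change ((k : ℕ) + 1) % m = _
  split_ifs with h
  · rw [h, Nat.mod_self]
  · exact Nat.mod_eq_of_lt (by omega)

lemma tau_mem_allowedMod (m : ℕ) : tau K m ∈ allowedMod K (TVert m) (Trap m) 3 := by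
  rw [allowedMod_eq_supported]
  exact Submodule.sum_mem _ fun k _ =>
    sub_mem (single_mem_supported K 1 (by simp [Trap, TrapAdj]))
      (single_mem_supported K 1 (by simp [Trap, TrapAdj]))

lemma bdry_tau (m : ℕ) :
    bdry K (TVert m) 2 (tau K m) =
      ∑ k : Fin m,
        (single ![TVert.vi k, TVert.vj k, TVert.b] 1
          - single ![TVert.vi (finRot k), TVert.vj k, TVert.b] 1
          - single ![TVert.a, TVert.vi k, TVert.vj k] 1
          + single ![TVert.a, TVert.vi (finRot k), TVert.vj k] (1 : K)) := by
  have hface : ∀ x y : Fin m,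
      bdry K (TVert m) 2 (single ![TVert.a, TVert.vi x, TVert.vj y, TVert.b] 1) =
        single ![TVert.vi x, TVert.vj y, TVert.b] 1 - single ![TVert.a, TVert.vj y, TVert.b] 1
          + single ![TVert.a, TVert.vi x, TVert.b] 1
          - single ![TVert.a, TVert.vi x, TVert.vj y] (1 : K) := by
    intro x y
    rw [bdry, LinearMap.comp_apply, bdryFull_single_three]
    simp [regProj_single]
  -- the faces `a i_k b` cancel after reindexing by the rotation `k ↦ k + 1`
  have hcancel : ∑ k : Fin m, single ![TVert.a, TVert.vi (finRot k), TVert.b] (1 : K)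
      = ∑ k : Fin m, single ![TVert.a, TVert.vi k, TVert.b] 1 := by
    rw [finRot_eq_finRotate]
    exact Equiv.sum_comp (finRotate m) fun k => single ![TVert.a, TVert.vi k, TVert.b] (1 : K)
  rw [tau, map_sum]
  simp only [map_sub, hface]
  rw [← sub_eq_zero, ← Finset.sum_sub_distrib]
  calc _ = ∑ k : Fin m, (single ![TVert.a, TVert.vi k, TVert.b] (1 : K)
          - single ![TVert.a, TVert.vi (finRot k), TVert.b] 1) :=
        Finset.sum_congr rfl fun k _ => by abel
    _ = 0 := by rw [Finset.sum_sub_distrib, hcancel, sub_self]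

lemma bdry_tau_mem_allowedMod (m : ℕ) :
    bdry K (TVert m) 2 (tau K m) ∈ allowedMod K (TVert m) (Trap m) 2 := by
  rw [bdry_tau, allowedMod_eq_supported]
  exact Submodule.sum_mem _ fun k _ =>
    add_mem (sub_mem (sub_mem (single_mem_supported K 1 (by simp [Trap, TrapAdj]))
      (single_mem_supported K 1 (by simp [Trap, TrapAdj])))
      (single_mem_supported K 1 (by simp [Trap, TrapAdj])))
      (single_mem_supported K 1 (by simp [Trap, TrapAdj]))

def trapImages (K : Type*) [Field K] {V : Type*} (G : Dgraph V) : Set (EPath V 3 →₀ K) :=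
  {t | ∃ (m : ℕ) (_ : 2 ≤ m) (f : DgraphMap (Trap m) G), t = inducedMap K f.toFun 3 (tau K m)}

lemma mem_Omega_three {G : Dgraph V} {ω : EPath V 3 →₀ K} :
    ω ∈ Omega K V G 3 ↔ ω ∈ allowedMod K V G 3 ∧ bdry K V 2 ω ∈ allowedMod K V G 2 :=
  Iff.rfl

lemma trapImages_subset_Omega (G : Dgraph V) : trapImages K G ⊆ Omega K V G 3 := by
  rintro _ ⟨m, -, f, rfl⟩
  refine mem_Omega_three.2 ⟨?_, ?_⟩
  · exact inducedMap_mem_allowedMod f (tau_mem_allowedMod m)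
  · rw [bdry_inducedMap]
    exact inducedMap_mem_allowedMod f (bdry_tau_mem_allowedMod m)

end Trapezohedron

section Invariance

variable {K : Type*} [Field K] {V : Type*} {G : Dgraph V} {ω : EPath V 3 →₀ K}

lemma bdryFull_apply_eq_sum (u : EPath V 3 →₀ K) (g : EPath V 2) :
    bdryFull K V 2 u g = ∑ p ∈ u.support, u p * bdryFull K V 2 (single p 1) g := by
  conv_lhs => rw [← u.sum_single]
  rw [map_finsuppSum, Finsupp.sum_apply, Finsupp.sum]
  refine Finset.sum_congr rfl fun p _ => ?_
  rw [← smul_single_one, map_smul, Finsupp.smul_apply, smul_eq_mul]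

lemma bdryFull_apply_eq_zero_of_mem_Omega (hω : ω ∈ Omega K V G 3) {g : EPath V 2}
    (hreg : IsRegularPath g) (hg : ¬ IsAllowedPath G g) : bdryFull K V 2 ω g = 0 := by
  by_contra h
  refine hg (mem_allowedMod_iff.1 (mem_Omega_three.1 hω).2 g (mem_support_iff.2 ?_))
  rwa [bdry, LinearMap.comp_apply, regProj_eq_filter, filter_apply_pos _ _ hreg]

lemma bdryFull_single_apply_of_not_adj_right {p : EPath V 3} (hp : IsAllowedPath G p)
    {A u B : V} (hu : ¬ G.Adj u B) :
    bdryFull K V 2 (single p 1) ![A, u, B] = if p 0 = A ∧ p 1 = u ∧ p 3 = B then 1 else 0 := by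
  have h12 : ¬ (p 1 = u ∧ p 2 = B) := fun ⟨e1, e2⟩ => hu (e1 ▸ e2 ▸ hp 1)
  have h23 : ¬ (p 2 = u ∧ p 3 = B) := fun ⟨e2, e3⟩ => hu (e2 ▸ e3 ▸ hp 2)
  simp only [bdryFull_single_three, coe_sub, coe_add, Pi.sub_apply, Pi.add_apply, single_apply,
    Matrix.vecCons_inj, and_true]
  rw [if_neg (fun h : p 1 = A ∧ p 2 = u ∧ p 3 = B => h23 h.2),
    if_neg (fun h : p 0 = A ∧ p 2 = u ∧ p 3 = B => h23 h.2),
    if_neg (fun h : p 0 = A ∧ p 1 = u ∧ p 2 = B => h12 h.2)]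
  ring

lemma bdryFull_single_apply_of_not_adj_left {p : EPath V 3} (hp : IsAllowedPath G p)
    {A v B : V} (hv : ¬ G.Adj A v) :
    bdryFull K V 2 (single p 1) ![A, v, B] = -if p 0 = A ∧ p 2 = v ∧ p 3 = B then 1 else 0 := by
  have h01 : ¬ (p 0 = A ∧ p 1 = v) := fun ⟨e0, e1⟩ => hv (e0 ▸ e1 ▸ hp 0)
  have h12 : ¬ (p 1 = A ∧ p 2 = v) := fun ⟨e1, e2⟩ => hv (e1 ▸ e2 ▸ hp 1)
  simp only [bdryFull_single_three, coe_sub, coe_add, Pi.sub_apply, Pi.add_apply, single_apply,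
    Matrix.vecCons_inj, and_true]
  rw [if_neg (fun h : p 1 = A ∧ p 2 = v ∧ p 3 = B => h12 ⟨h.1, h.2.1⟩),
    if_neg (fun h : p 0 = A ∧ p 1 = v ∧ p 3 = B => h01 ⟨h.1, h.2.1⟩),
    if_neg (fun h : p 0 = A ∧ p 1 = v ∧ p 2 = B => h01 ⟨h.1, h.2.1⟩)]
  ring

def middleEdges (A B : V) (ω : EPath V 3 →₀ K) : Set (V × V) :=
  {e | ![A, e.1, e.2, B] ∈ ω.support}

lemma isAllowedPath_of_mem_middleEdges (hω : ω ∈ Omega K V G 3) {A B u v : V}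
    (he : (u, v) ∈ middleEdges A B ω) : G.Adj A u ∧ G.Adj u v ∧ G.Adj v B :=
  (isAllowedPath_vec4 G A u v B).1 (mem_allowedMod_iff.1 (mem_Omega_three.1 hω).1 _ he)

lemma exists_ne_right_of_mem_middleEdges (hω : ω ∈ Omega K V G 3) {A B u v : V}
    (he : (u, v) ∈ middleEdges A B ω) (hu : ¬ (G.Adj u B ∨ u = B)) :
    ∃ v', v' ≠ v ∧ (u, v') ∈ middleEdges A B ω := by
  by_contra! hno
  rw [not_or] at hu
  have hall : ∀ p ∈ ω.support, IsAllowedPath G p := mem_allowedMod_iff.1 (mem_Omega_three.1 hω).1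
  obtain ⟨hAu, -, -⟩ := isAllowedPath_of_mem_middleEdges hω he
  have h0 := bdryFull_apply_eq_zero_of_mem_Omega hω (g := ![A, u, B])
    ((isRegularPath_vec3 _ _ _).2 ⟨fun h => G.loopless u (h ▸ hAu), hu.2⟩)
    (fun h => hu.1 ((isAllowedPath_vec3 _ _ _ _).1 h).2)
  rw [bdryFull_apply_eq_sum, Finset.sum_eq_single ![A, u, v, B]] at h0
  · rw [bdryFull_single_apply_of_not_adj_right (hall _ he) hu.1] at h0
    simp only [Matrix.cons_val, and_self, if_true, mul_one] at h0
    exact mem_support_iff.1 he h0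
  · intro p hp hne
    rw [bdryFull_single_apply_of_not_adj_right (hall p hp) hu.1, if_neg, mul_zero]
    rintro ⟨h0, h1, h3⟩
    have hp' : p = ![A, u, p 2, B] := by rw [epath3_eq_vec p, h0, h1, h3]; rfl
    by_cases h2 : p 2 = v
    · exact hne (hp'.trans (by rw [h2]))
    · exact hno (p 2) h2 (show ![A, u, p 2, B] ∈ ω.support from hp' ▸ hp)
  · exact fun h => absurd he h

lemma exists_ne_left_of_mem_middleEdges (hω : ω ∈ Omega K V G 3) {A B u v : V}
    (he : (u, v) ∈ middleEdges A B ω) (hv : ¬ (G.Adj A v ∨ A = v)) :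
    ∃ u', u' ≠ u ∧ (u', v) ∈ middleEdges A B ω := by
  by_contra! hno
  rw [not_or] at hv
  have hall : ∀ p ∈ ω.support, IsAllowedPath G p := mem_allowedMod_iff.1 (mem_Omega_three.1 hω).1
  obtain ⟨-, -, hvB⟩ := isAllowedPath_of_mem_middleEdges hω he
  have h0 := bdryFull_apply_eq_zero_of_mem_Omega hω (g := ![A, v, B])
    ((isRegularPath_vec3 _ _ _).2 ⟨hv.2, fun h => G.loopless B (h ▸ hvB)⟩)
    (fun h => hv.1 ((isAllowedPath_vec3 _ _ _ _).1 h).1)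
  rw [bdryFull_apply_eq_sum, Finset.sum_eq_single ![A, u, v, B]] at h0
  · rw [bdryFull_single_apply_of_not_adj_left (hall _ he) hv.1] at h0
    simp only [Matrix.cons_val, and_self, if_true, mul_neg, mul_one, neg_eq_zero] at h0
    exact mem_support_iff.1 he h0
  · intro p hp hne
    rw [bdryFull_single_apply_of_not_adj_left (hall p hp) hv.1, if_neg, neg_zero, mul_zero]
    rintro ⟨h0, h2, h3⟩
    have hp' : p = ![A, p 1, v, B] := by rw [epath3_eq_vec p, h0, h2, h3]; rfl
    by_cases h1 : p 1 = u
    · exact hne (hp'.trans (by rw [h1]))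
    · exact hno (p 1) h1 (show ![A, p 1, v, B] ∈ ω.support from hp' ▸ hp)
  · exact fun h => absurd he h

end Invariance

section Zigzag

variable {α β : Type*} {S : Set (α × β)} {n : ℕ} {r : ℕ → α} {c : ℕ → β}

/-- A path `r 0, c 0, r 1, c 1, …, r n, c n` in the bipartite graph with edge set `S`. -/
structure IsZigzag (S : Set (α × β)) (n : ℕ) (r : ℕ → α) (c : ℕ → β) : Prop where
  injOn_row : Set.InjOn r (Set.Iic n)
  injOn_col : Set.InjOn c (Set.Iic n)
  mem : ∀ k ≤ n, (r k, c k) ∈ S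
  mem_succ : ∀ k < n, (r (k + 1), c k) ∈ S

def HasCycle (S : Set (α × β)) : Prop :=
  ∃ n r c, IsZigzag S (n + 1) r c ∧ (r 0, c (n + 1)) ∈ S

lemma injOn_update_Iic {γ : Type*} {f : ℕ → γ} {x : γ} (hf : Set.InjOn f (Set.Iic n))
    (hx : ∀ k ≤ n, x ≠ f k) : Set.InjOn (Function.update f (n + 1) x) (Set.Iic (n + 1)) := by
  intro i hi j hj h
  simp only [Set.mem_Iic] at hi hj
  rcases hi.lt_or_eq with hi | rfl <;> rcases hj.lt_or_eq with hj | rfl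
  · rw [Function.update_of_ne (Nat.ne_of_lt hi), Function.update_of_ne (Nat.ne_of_lt hj)] at h
    exact hf (Set.mem_Iic.2 (by omega)) (Set.mem_Iic.2 (by omega)) h
  · rw [Function.update_of_ne (Nat.ne_of_lt hi), Function.update_self] at h
    exact absurd h.symm (hx i (by omega))
  · rw [Function.update_of_ne (Nat.ne_of_lt hj), Function.update_self] at h
    exact absurd h (hx j (by omega))
  · rfl

namespace IsZigzag

lemma row_ne (hz : IsZigzag S n r c) {i j : ℕ} (hi : i ≤ n) (hj : j ≤ n) (hij : i ≠ j) :
    r i ≠ r j :=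
  fun h => hij (hz.injOn_row (Set.mem_Iic.2 hi) (Set.mem_Iic.2 hj) h)

lemma col_ne (hz : IsZigzag S n r c) {i j : ℕ} (hi : i ≤ n) (hj : j ≤ n) (hij : i ≠ j) :
    c i ≠ c j :=
  fun h => hij (hz.injOn_col (Set.mem_Iic.2 hi) (Set.mem_Iic.2 hj) h)

lemma of_mem {x : α} {y : β} (h : (x, y) ∈ S) : IsZigzag S 0 (fun _ => x) (fun _ => y) where
  injOn_row i hi j hj _ := by rw [Set.mem_Iic, Nat.le_zero] at hi hj; rw [hi, hj]
  injOn_col i hi j hj _ := by rw [Set.mem_Iic, Nat.le_zero] at hi hj; rw [hi, hj]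
  mem _ _ := h
  mem_succ _ hk := absurd hk (Nat.not_lt_zero _)

lemma of_le (hz : IsZigzag S n r c) {m : ℕ} (hm : m ≤ n) : IsZigzag S m r c where
  injOn_row := hz.injOn_row.mono (Set.Iic_subset_Iic.2 hm)
  injOn_col := hz.injOn_col.mono (Set.Iic_subset_Iic.2 hm)
  mem k hk := hz.mem k (hk.trans hm)
  mem_succ k hk := hz.mem_succ k (hk.trans_le hm)

lemma shift (hz : IsZigzag S n r c) {j : ℕ} (hj : j ≤ n) :
    IsZigzag S (n - j) (fun k => r (j + k)) (fun k => c (j + k)) where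
  injOn_row i hi i' hi' h := by
    simp only [Set.mem_Iic] at hi hi'
    by_contra hne
    exact hz.row_ne (i := j + i) (j := j + i') (by omega) (by omega) (by omega) h
  injOn_col i hi i' hi' h := by
    simp only [Set.mem_Iic] at hi hi'
    by_contra hne
    exact hz.col_ne (i := j + i) (j := j + i') (by omega) (by omega) (by omega) h
  mem k hk := hz.mem (j + k) (by omega)
  mem_succ k hk := hz.mem_succ (j + k) (by omega)

lemma snoc (hz : IsZigzag S n r c) {x : α} {y : β} (hx : ∀ k ≤ n, x ≠ r k)
    (hy : ∀ k ≤ n, y ≠ c k) (hxc : (x, c n) ∈ S) (hxy : (x, y) ∈ S) :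
    IsZigzag S (n + 1) (Function.update r (n + 1) x) (Function.update c (n + 1) y) where
  injOn_row := injOn_update_Iic hz.injOn_row hx
  injOn_col := injOn_update_Iic hz.injOn_col hy
  mem k hk := by
    rcases hk.lt_or_eq with hk | rfl
    · simpa only [Function.update_of_ne (Nat.ne_of_lt hk)] using hz.mem k (by omega)
    · simpa only [Function.update_self] using hxy
  mem_succ k hk := by
    rcases (Nat.lt_succ_iff.1 hk).lt_or_eq with hk | rfl
    · simpa only [Function.update_of_ne (show k + 1 ≠ n + 1 by omega),
        Function.update_of_ne (show k ≠ n + 1 by omega)] using hz.mem_succ k hk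
    · simpa only [Function.update_self, Function.update_of_ne (show k ≠ k + 1 by omega)] using hxc

lemma reverse (hz : IsZigzag S n r c) :
    IsZigzag (Prod.swap ⁻¹' S) n (fun k => c (n - k)) (fun k => r (n - k)) where
  injOn_row i hi j hj h := by
    simp only [Set.mem_Iic] at hi hj
    have := hz.injOn_col (Set.mem_Iic.2 (Nat.sub_le n i)) (Set.mem_Iic.2 (Nat.sub_le n j)) h
    omega
  injOn_col i hi j hj h := by
    simp only [Set.mem_Iic] at hi hj
    have := hz.injOn_row (Set.mem_Iic.2 (Nat.sub_le n i)) (Set.mem_Iic.2 (Nat.sub_le n j)) h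
    omega
  mem k _ := hz.mem (n - k) (Nat.sub_le n k)
  mem_succ k hk := by
    have := hz.mem_succ (n - (k + 1)) (by omega)
    rwa [show n - (k + 1) + 1 = n - k by omega] at this

lemma lt_card (hz : IsZigzag S n r c) (hS : S.Finite) : n < hS.toFinset.card := by
  have h := Finset.card_le_card_of_injOn (s := Finset.range (n + 1)) (t := hS.toFinset)
    (fun k => (r k, c k))
    (fun k hk => by simpa using hz.mem k (by simpa [Nat.lt_succ_iff] using hk))
    (fun i hi j hj h => hz.injOn_row (by simpa [Nat.lt_succ_iff] using hi)
      (by simpa [Nat.lt_succ_iff] using hj) (congrArg Prod.fst h))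
  simpa using h

lemma hasCycle_of_mem (hz : IsZigzag S n r c) {j : ℕ} (hj : j < n) (h : (r j, c n) ∈ S) :
    HasCycle S := by
  refine ⟨n - j - 1, fun k => r (j + k), fun k => c (j + k), ?_, ?_⟩
  · rw [show n - j - 1 + 1 = n - j by omega]
    exact hz.shift hj.le
  · simpa [show j + (n - j - 1 + 1) = n by omega] using h

lemma hasCycle_of_snoc (hz : IsZigzag S n r c) {j : ℕ} (hj : j < n) {x : α}
    (hx : ∀ k ≤ n, x ≠ r k) (hxn : (x, c n) ∈ S) (hxj : (x, c j) ∈ S) : HasCycle S := by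
  have hz' := (hz.shift (Nat.succ_le_of_lt hj)).snoc (x := x) (y := c j)
    (fun k hk => hx _ (by omega)) (fun k hk => hz.col_ne (by omega) (by omega) (by omega))
    (by simpa [show j + 1 + (n - (j + 1)) = n by omega] using hxn) hxj
  refine ⟨n - (j + 1), _, _, hz', ?_⟩
  simpa [Function.update_of_ne (show (0 : ℕ) ≠ n - (j + 1) + 1 by omega)] using hz.mem_succ j hj

end IsZigzag

lemma HasCycle.of_swap (h : HasCycle (Prod.swap ⁻¹' S)) : HasCycle S := by
  obtain ⟨n, r, c, hz, hclose⟩ := h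
  exact ⟨n, _, _, hz.reverse, by simpa using hclose⟩

lemma exists_maximal_isZigzag (hS : S.Finite) {e : α × β} (he : e ∈ S) :
    ∃ n r c, IsZigzag S n r c ∧ ∀ r' c', ¬ IsZigzag S (n + 1) r' c' := by
  let P := fun n => ∃ r c, IsZigzag S n r c
  have h0 : P 0 := ⟨_, _, IsZigzag.of_mem he⟩
  obtain ⟨r, c, hz⟩ := Nat.findGreatest_spec (P := P) (Nat.zero_le hS.toFinset.card) h0
  exact ⟨_, r, c, hz, fun r' c' hz' =>
    Nat.findGreatest_is_greatest (Nat.lt_succ_self _) (hz'.lt_card hS).le ⟨r', c', hz'⟩⟩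

namespace IsZigzag

variable {FR : α → Prop} {FC : β → Prop}

lemma hasCycle_or_free_right_of_maximal (hrow : ∀ e ∈ S, ¬ FR e.1 → ∃ y, y ≠ e.2 ∧ (e.1, y) ∈ S)
    (hcol : ∀ e ∈ S, ¬ FC e.2 → ∃ x, x ≠ e.1 ∧ (x, e.2) ∈ S)
    (hz : IsZigzag S n r c) (hmax : ∀ r' c', ¬ IsZigzag S (n + 1) r' c') :
    HasCycle S ∨ FC (c n) ∨ ∃ x, FR x ∧ (x, c n) ∈ S ∧ ∀ k ≤ n, x ≠ r k := by
  by_cases hFC : FC (c n)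
  · exact Or.inr (Or.inl hFC)
  obtain ⟨x, hxn, hx⟩ := hcol _ (hz.mem n le_rfl) hFC
  by_cases hxold : ∃ j ≤ n, x = r j
  · obtain ⟨j, hj, rfl⟩ := hxold
    exact Or.inl (hz.hasCycle_of_mem (lt_of_le_of_ne hj (by rintro rfl; exact hxn rfl)) hx)
  simp only [not_exists, not_and] at hxold
  by_cases hFR : FR x
  · exact Or.inr (Or.inr ⟨x, hFR, hx, hxold⟩)
  obtain ⟨y, hyn, hy⟩ := hrow _ hx hFR
  by_cases hyold : ∃ j ≤ n, y = c j
  · obtain ⟨j, hj, rfl⟩ := hyold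
    exact Or.inl (hz.hasCycle_of_snoc (lt_of_le_of_ne hj (by rintro rfl; exact hyn rfl))
      hxold hx hy)
  simp only [not_exists, not_and] at hyold
  exact (hmax _ _ (hz.snoc hxold hyold hx hy)).elim

lemma hasCycle_or_free_left_of_maximal (hrow : ∀ e ∈ S, ¬ FR e.1 → ∃ y, y ≠ e.2 ∧ (e.1, y) ∈ S)
    (hcol : ∀ e ∈ S, ¬ FC e.2 → ∃ x, x ≠ e.1 ∧ (x, e.2) ∈ S)
    (hz : IsZigzag S n r c) (hmax : ∀ r' c', ¬ IsZigzag S (n + 1) r' c') :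
    HasCycle S ∨ FR (r 0) ∨ ∃ y, FC y ∧ (r 0, y) ∈ S ∧ ∀ k ≤ n, y ≠ c k := by
  rcases hz.reverse.hasCycle_or_free_right_of_maximal (FR := FC) (FC := FR)
      (fun e he h => hcol e.swap he h) (fun e he h => hrow e.swap he h)
      (fun r' c' h => hmax _ _ h.reverse) with
    h | h | ⟨y, hy, hyS, hyc⟩
  · exact Or.inl h.of_swap
  · exact Or.inr (Or.inl (by simpa using h))
  · refine Or.inr (Or.inr ⟨y, hy, by rw [Nat.sub_self] at hyS; exact hyS, fun k hk => ?_⟩)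
    simpa [Nat.sub_sub_self hk] using hyc (n - k) (Nat.sub_le n k)

lemma not_extend_both_of_maximal (hz : IsZigzag S n r c)
    (hmax : ∀ r' c', ¬ IsZigzag S (n + 1) r' c') {x : α} {y : β} (hx : ∀ k ≤ n, x ≠ r k)
    (hxS : (x, c n) ∈ S) (hy : ∀ k ≤ n, y ≠ c k) (hyS : (r 0, y) ∈ S) : False := by
  -- `x, c n, r n, …, c 0, r 0, y` would be a longer zigzag
  refine hmax (fun k => if k = 0 then x else r (n + 1 - k))
    (fun k => if k = n + 1 then y else c (n - k)) ⟨?_, ?_, fun k hk => ?_, fun k hk => ?_⟩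
  · intro i hi j hj h
    simp only [Set.mem_Iic] at hi hj
    beta_reduce at h
    split_ifs at h with hi0 hj0 hj0
    · omega
    · exact absurd h (hx _ (by omega))
    · exact absurd h.symm (hx _ (by omega))
    · by_contra hne
      exact hz.row_ne (i := n + 1 - i) (j := n + 1 - j) (by omega) (by omega) (by omega) h
  · intro i hi j hj h
    simp only [Set.mem_Iic] at hi hj
    beta_reduce at h
    split_ifs at h with hi0 hj0 hj0
    · omega
    · exact absurd h (hy _ (by omega))
    · exact absurd h.symm (hy _ (by omega))
    · by_contra hne
      exact hz.col_ne (i := n - i) (j := n - j) (by omega) (by omega) (by omega) h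
  · split_ifs with h0 h1 h1
    · omega
    · simpa [h0] using hxS
    · simpa [h1] using hyS
    · simpa [show n - k + 1 = n + 1 - k by omega] using hz.mem_succ (n - k) (by omega)
  · rw [if_neg (by omega), if_neg (by omega), show n + 1 - (k + 1) = n - k by omega]
    exact hz.mem (n - k) (by omega)

end IsZigzag

theorem hasCycle_or_exists_free_zigzag {FR : α → Prop} {FC : β → Prop} (hS : S.Finite)
    (hne : S.Nonempty) (hrow : ∀ e ∈ S, ¬ FR e.1 → ∃ y, y ≠ e.2 ∧ (e.1, y) ∈ S)
    (hcol : ∀ e ∈ S, ¬ FC e.2 → ∃ x, x ≠ e.1 ∧ (x, e.2) ∈ S) :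
    HasCycle S ∨ ∃ n r c, IsZigzag S n r c ∧
      (FR (r 0) ∧ FC (c n) ∨
        FR (r 0) ∧ (∃ x, FR x ∧ (x, c n) ∈ S ∧ ∀ k ≤ n, x ≠ r k) ∨
        (∃ y, FC y ∧ (r 0, y) ∈ S ∧ ∀ k ≤ n, y ≠ c k) ∧ FC (c n)) := by
  obtain ⟨e, he⟩ := hne
  obtain ⟨n, r, c, hz, hmax⟩ := exists_maximal_isZigzag hS he
  rcases hz.hasCycle_or_free_left_of_maximal hrow hcol hmax with hcyc | hl | ⟨y, hyFC, hyS, hy⟩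
  · exact Or.inl hcyc
  all_goals rcases hz.hasCycle_or_free_right_of_maximal hrow hcol hmax with
    hcyc | hr | ⟨x, hxFR, hxS, hx⟩
  · exact Or.inl hcyc
  · exact Or.inr ⟨n, r, c, hz, Or.inl ⟨hl, hr⟩⟩
  · exact Or.inr ⟨n, r, c, hz, Or.inr (Or.inl ⟨hl, x, hxFR, hxS, hx⟩)⟩
  · exact Or.inl hcyc
  · exact Or.inr ⟨n, r, c, hz, Or.inr (Or.inr ⟨⟨y, hyFC, hyS, hy⟩, hr⟩)⟩
  · exact (hz.not_extend_both_of_maximal hmax hx hxS hy hyS).elim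

end Zigzag

section TrapezohedralImages

variable {K : Type*} [Field K] {V : Type*} {G : Dgraph V} {ω : EPath V 3 →₀ K} {A B : V}

def trapMap (A B : V) (X Y : ℕ → V) (m : ℕ) : TVert m → V
  | .a => A
  | .b => B
  | .vi k => X k
  | .vj k => Y k

/-- Sending `a, i, j, b` to `A, x, y, B` respects arrows, and the image of `a i j b` is
degenerate or occurs in `ω`. -/
def IsTrapStep (G : Dgraph V) (ω : EPath V 3 →₀ K) (A B x y : V) : Prop :=
  (G.Adj A x ∨ A = x) ∧ (G.Adj x y ∨ x = y) ∧ (G.Adj y B ∨ y = B) ∧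
    (IsRegularPath ![A, x, y, B] → ![A, x, y, B] ∈ ω.support)

lemma isTrapStep_of_mem_middleEdges (hω : ω ∈ Omega K V G 3) {x y : V}
    (h : (x, y) ∈ middleEdges A B ω) : IsTrapStep G ω A B x y := by
  obtain ⟨hAx, hxy, hyB⟩ := isAllowedPath_of_mem_middleEdges hω h
  exact ⟨Or.inl hAx, Or.inl hxy, Or.inl hyB, fun _ => h⟩

lemma isTrapStep_of_not_isRegularPath {x y : V} (hAx : G.Adj A x ∨ A = x)
    (hxy : G.Adj x y ∨ x = y) (hyB : G.Adj y B ∨ y = B) (h : ¬ IsRegularPath ![A, x, y, B]) :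
    IsTrapStep G ω A B x y :=
  ⟨hAx, hxy, hyB, fun h' => absurd h' h⟩

lemma inducedMap_trapMap_tau (X Y : ℕ → V) (m : ℕ) :
    inducedMap K (trapMap A B X Y m) 3 (tau K m) =
      (∑ k : Fin m,
        (single ![A, X k, Y k, B] (1 : K) - single ![A, X (finRot k), Y k, B] 1)).filter
          IsRegularPath := by
  rw [inducedMap_eq, tau, mapDomain_finsetSum]
  congr 1
  refine Finset.sum_congr rfl fun k _ => ?_
  rw [mapDomain_sub, mapDomain_single, mapDomain_single]
  congr 2 <;> ext i <;> fin_cases i <;> rfl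

lemma exists_trapImage_of_closedZigzag {m : ℕ} (hm : 2 ≤ m) {X Y : ℕ → V}
    (hstep : ∀ k : Fin m, IsTrapStep G ω A B (X k) (Y k))
    (hstep' : ∀ k : Fin m, IsTrapStep G ω A B (X (finRot k)) (Y k))
    (hreg : IsRegularPath ![A, X 0, Y 0, B])
    (huniq : ∀ k : Fin m, X k = X 0 → Y k = Y 0 → (k : ℕ) = 0)
    (huniq' : ∀ k : Fin m, X (finRot k) = X 0 → Y k ≠ Y 0) :
    ∃ t ∈ trapImages K G, t ≠ 0 ∧ t.support ⊆ ω.support := by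
  let f : DgraphMap (Trap m) G :=
    { toFun := trapMap A B X Y m
      map_adj := by
        rintro (_ | _ | k | k) (_ | _ | l | l) h <;> try exact h.elim
        · exact (hstep l).1
        · rcases h with rfl | rfl
          exacts [(hstep k).2.1, (hstep' l).2.1]
        · exact (hstep k).2.2.1 }
  refine ⟨_, ⟨m, hm, f, rfl⟩, fun h => ?_, fun p hp => ?_⟩
  · -- the coefficient of `A (X 0) (Y 0) B` is `1`
    have h0 := DFunLike.congr_fun h ![A, X 0, Y 0, B]
    rw [inducedMap_trapMap_tau, filter_apply_pos _ _ hreg, finsetSum_apply,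
      Finset.sum_eq_single (⟨0, by omega⟩ : Fin m)] at h0
    · have h1 : X (finRot (⟨0, by omega⟩ : Fin m)) ≠ X 0 := fun h => huniq' ⟨0, by omega⟩ h rfl
      simp [h1] at h0
    · intro k _ hk
      have h1 : ¬ (X k = X 0 ∧ Y k = Y 0) := fun h => hk (Fin.ext (huniq k h.1 h.2))
      have h2 : ¬ (X (finRot k) = X 0 ∧ Y k = Y 0) := fun h => huniq' k h.1 h.2
      simp only [coe_sub, Pi.sub_apply, single_apply, Matrix.vecCons_inj, and_true, true_and,
        if_neg h1, if_neg h2, sub_zero]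
    · simp
  · rw [inducedMap_trapMap_tau, support_filter, Finset.mem_filter] at hp
    obtain ⟨hp, hpreg⟩ := hp
    obtain ⟨k, -, hk⟩ := Finset.mem_biUnion.1 (support_finsetSum hp)
    rcases Finset.mem_union.1 (support_sub hk) with hk | hk <;>
      rw [Finset.mem_singleton.1 (support_single_subset hk)] at hpreg ⊢
    exacts [(hstep k).2.2.2 hpreg, (hstep' k).2.2.2 hpreg]

lemma exists_trapImage_of_isZigzag (hω : ω ∈ Omega K V G 3) {n : ℕ} {r c : ℕ → V}
    (hz : IsZigzag (middleEdges A B ω) n r c) {x y : V}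
    (hxc : IsTrapStep G ω A B x (c n)) (hxy : IsTrapStep G ω A B x y)
    (hry : IsTrapStep G ω A B (r 0) y) (hx : n = 0 → x ≠ r 0) (hy : y ≠ c 0) :
    ∃ t ∈ trapImages K G, t ≠ 0 ∧ t.support ⊆ ω.support := by
  have hr : ∀ i ≤ n, Function.update r (n + 1) x i = r i :=
    fun i hi => Function.update_of_ne (by omega) _ _
  have hc : ∀ i ≤ n, Function.update c (n + 1) y i = c i :=
    fun i hi => Function.update_of_ne (by omega) _ _
  -- the closed zigzag `r 0, c 0, …, r n, c n, x, y, r 0`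
  refine exists_trapImage_of_closedZigzag (A := A) (B := B) (m := n + 2)
    (X := Function.update r (n + 1) x) (Y := Function.update c (n + 1) y) (by omega)
    ?_ ?_ ?_ ?_ ?_
  · rintro ⟨i, hi⟩
    rcases Nat.lt_succ_iff.1 hi |>.lt_or_eq with hi | rfl
    · rw [hr i (by omega), hc i (by omega)]
      exact isTrapStep_of_mem_middleEdges hω (hz.mem i (by omega))
    · simpa using hxy
  · rintro ⟨i, hi⟩
    simp only [val_finRot]
    rcases Nat.lt_succ_iff.1 hi |>.lt_or_eq with hi | rfl
    · rcases Nat.lt_succ_iff.1 hi |>.lt_or_eq with hi | rfl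
      · rw [if_neg (by omega), hr (i + 1) (by omega), hc i (by omega)]
        exact isTrapStep_of_mem_middleEdges hω (hz.mem_succ i hi)
      · simpa [hc i le_rfl] using hxc
    · simpa [hr 0 (Nat.zero_le n)] using hry
  · rw [hr 0 (Nat.zero_le n), hc 0 (Nat.zero_le n)]
    exact (mem_allowedMod_iff.1 (mem_Omega_three.1 hω).1 _
      (hz.mem 0 (Nat.zero_le n))).isRegularPath
  · rintro ⟨i, hi⟩ - hY
    show i = 0
    rw [hc 0 (Nat.zero_le n)] at hY
    rcases Nat.lt_succ_iff.1 hi |>.lt_or_eq with hi | rfl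
    · rw [hc i (by omega)] at hY
      by_contra h
      exact hz.col_ne (by omega) (Nat.zero_le n) h hY
    · exact absurd (by simpa using hY) hy
  · rintro ⟨i, hi⟩ hX hY
    simp only [val_finRot, hr 0 (Nat.zero_le n), hc 0 (Nat.zero_le n)] at hX hY
    rcases Nat.lt_succ_iff.1 hi |>.lt_or_eq with hi | rfl
    · rcases Nat.lt_succ_iff.1 hi |>.lt_or_eq with hi | rfl
      · rw [if_neg (by omega), hr (i + 1) (by omega)] at hX
        exact hz.row_ne (by omega) (Nat.zero_le n) (by omega) hX
      · rw [if_neg (by omega), Function.update_self] at hX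
        rw [hc i le_rfl] at hY
        rcases Nat.eq_zero_or_pos i with rfl | hpos
        · exact hx rfl hX
        · exact hz.col_ne le_rfl (Nat.zero_le _) (by omega) hY
    · exact hy (by simpa using hY)

end TrapezohedralImages

section Spanning

variable {K : Type*} [Field K] {V : Type*} {G : Dgraph V} {ω : EPath V 3 →₀ K} {A B : V}

lemma HasCycle.exists_trapImage (hω : ω ∈ Omega K V G 3) (h : HasCycle (middleEdges A B ω)) :
    ∃ t ∈ trapImages K G, t ≠ 0 ∧ t.support ⊆ ω.support := by
  obtain ⟨n, r, c, hz, hclose⟩ := h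
  exact exists_trapImage_of_isZigzag hω (hz.of_le n.le_succ)
    (isTrapStep_of_mem_middleEdges hω (hz.mem_succ n n.lt_succ_self))
    (isTrapStep_of_mem_middleEdges hω (hz.mem (n + 1) le_rfl))
    (isTrapStep_of_mem_middleEdges hω hclose)
    (fun _ => hz.row_ne le_rfl (Nat.zero_le _) n.succ_ne_zero)
    (hz.col_ne le_rfl (Nat.zero_le _) n.succ_ne_zero)

/-- Closed up through `A, c n`, `A, r 0` and `r 0, r 0`, all degenerate. -/
lemma IsZigzag.exists_trapImage_of_free_ends (hω : ω ∈ Omega K V G 3) {n : ℕ} {r c : ℕ → V}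
    (hz : IsZigzag (middleEdges A B ω) n r c) (hr : G.Adj (r 0) B ∨ r 0 = B)
    (hc : G.Adj A (c n) ∨ A = c n) :
    ∃ t ∈ trapImages K G, t ≠ 0 ∧ t.support ⊆ ω.support := by
  obtain ⟨hA0, h0c, -⟩ := isAllowedPath_of_mem_middleEdges hω (hz.mem 0 (Nat.zero_le n))
  obtain ⟨-, -, hcB⟩ := isAllowedPath_of_mem_middleEdges hω (hz.mem n le_rfl)
  exact exists_trapImage_of_isZigzag hω hz (x := A) (y := r 0)
    (isTrapStep_of_not_isRegularPath (Or.inr rfl) hc (Or.inl hcB) (by simp))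
    (isTrapStep_of_not_isRegularPath (Or.inr rfl) (Or.inl hA0) hr (by simp))
    (isTrapStep_of_not_isRegularPath (Or.inl hA0) (Or.inr rfl) hr (by simp))
    (fun _ h => G.loopless A (h ▸ hA0)) (fun h => G.loopless _ (h ▸ h0c))

/-- Closed up through the free row `x` and the degenerate steps `x, B` and `r 0, B`. -/
lemma IsZigzag.exists_trapImage_of_free_row (hω : ω ∈ Omega K V G 3) {n : ℕ} {r c : ℕ → V}
    (hz : IsZigzag (middleEdges A B ω) n r c) (hr : G.Adj (r 0) B ∨ r 0 = B) {x : V}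
    (hx : G.Adj x B ∨ x = B) (hxc : (x, c n) ∈ middleEdges A B ω) (hxr : ∀ k ≤ n, x ≠ r k) :
    ∃ t ∈ trapImages K G, t ≠ 0 ∧ t.support ⊆ ω.support := by
  obtain ⟨hA0, -, h0B⟩ := isAllowedPath_of_mem_middleEdges hω (hz.mem 0 (Nat.zero_le n))
  obtain ⟨hAx, -, -⟩ := isAllowedPath_of_mem_middleEdges hω hxc
  exact exists_trapImage_of_isZigzag hω hz (x := x) (y := B)
    (isTrapStep_of_mem_middleEdges hω hxc)
    (isTrapStep_of_not_isRegularPath (Or.inl hAx) hx (Or.inr rfl) (by simp))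
    (isTrapStep_of_not_isRegularPath (Or.inl hA0) hr (Or.inr rfl) (by simp))
    (fun _ => hxr 0 (Nat.zero_le n)) (fun h => G.loopless B (h ▸ h0B))

/-- Closed up through the free column `y` and the degenerate steps `A, c n` and `A, y`. -/
lemma IsZigzag.exists_trapImage_of_free_col (hω : ω ∈ Omega K V G 3) {n : ℕ} {r c : ℕ → V}
    (hz : IsZigzag (middleEdges A B ω) n r c) (hc : G.Adj A (c n) ∨ A = c n) {y : V}
    (hy : G.Adj A y ∨ A = y) (hry : (r 0, y) ∈ middleEdges A B ω) (hyc : ∀ k ≤ n, y ≠ c k) :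
    ∃ t ∈ trapImages K G, t ≠ 0 ∧ t.support ⊆ ω.support := by
  obtain ⟨hA0, -, -⟩ := isAllowedPath_of_mem_middleEdges hω (hz.mem 0 (Nat.zero_le n))
  obtain ⟨-, -, hcB⟩ := isAllowedPath_of_mem_middleEdges hω (hz.mem n le_rfl)
  obtain ⟨-, -, hyB⟩ := isAllowedPath_of_mem_middleEdges hω hry
  exact exists_trapImage_of_isZigzag hω hz (x := A) (y := y)
    (isTrapStep_of_not_isRegularPath (Or.inr rfl) hc (Or.inl hcB) (by simp))
    (isTrapStep_of_not_isRegularPath (Or.inr rfl) hy (Or.inl hyB) (by simp))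
    (isTrapStep_of_mem_middleEdges hω hry)
    (fun _ h => G.loopless A (h ▸ hA0)) (hyc 0 (Nat.zero_le n))

theorem exists_trapImage_subset_support (hω : ω ∈ Omega K V G 3) (hne : ω ≠ 0) :
    ∃ t ∈ trapImages K G, t ≠ 0 ∧ t.support ⊆ ω.support := by
  obtain ⟨p, hp⟩ := support_nonempty_iff.2 hne
  have hE : (middleEdges (p 0) (p 3) ω).Finite :=
    (ω.support.finite_toSet.image fun q => (q 1, q 2)).subset fun e he => ⟨_, he, rfl⟩
  have hpE : (p 1, p 2) ∈ middleEdges (p 0) (p 3) ω := by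
    rw [middleEdges, Set.mem_ofPred, ← epath3_eq_vec p]
    exact hp
  rcases hasCycle_or_exists_free_zigzag (FR := fun u => G.Adj u (p 3) ∨ u = p 3)
      (FC := fun v => G.Adj (p 0) v ∨ p 0 = v) hE ⟨_, hpE⟩
      (fun e he h => exists_ne_right_of_mem_middleEdges hω he h)
      (fun e he h => exists_ne_left_of_mem_middleEdges hω he h) with
    hcyc | ⟨n, r, c, hz, ⟨hr, hc⟩ | ⟨hr, x, hx, hxc, hxr⟩ | ⟨⟨y, hy, hry, hyc⟩, hc⟩⟩
  · exact hcyc.exists_trapImage hω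
  · exact hz.exists_trapImage_of_free_ends hω hr hc
  · exact hz.exists_trapImage_of_free_row hω hr hx hxc hxr
  · exact hz.exists_trapImage_of_free_col hω hc hy hry hyc

lemma mem_span_trapImages (hω : ω ∈ Omega K V G 3) : ω ∈ Submodule.span K (trapImages K G) := by
  induction h : ω.support.card using Nat.strong_induction_on generalizing ω with
  | _ N ih =>
  by_cases h0 : ω = 0
  · rw [h0]
    exact Submodule.zero_mem _
  obtain ⟨t, ht, htne, hts⟩ := exists_trapImage_subset_support hω h0
  obtain ⟨p, hp⟩ := support_nonempty_iff.2 htne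
  -- subtracting a multiple of `t` kills the coefficient of `p` without enlarging the support
  set ω' := ω - (ω p / t p) • t with hω'
  have hω'p : ω' p = 0 := by
    rw [hω', Finsupp.sub_apply, Finsupp.smul_apply, smul_eq_mul,
      div_mul_cancel₀ _ (mem_support_iff.1 hp), sub_self]
  have hsub : ω'.support ⊂ ω.support := by
    refine Finset.ssubset_iff_of_subset (fun q hq => ?_) |>.2 ⟨p, hts hp, by simpa using hω'p⟩
    rcases Finset.mem_union.1 (support_sub hq) with hq | hq
    exacts [hq, hts (support_smul hq)]
  have hmem := ih _ (h ▸ Finset.card_lt_card hsub)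
    (sub_mem hω (Submodule.smul_mem _ _ (trapImages_subset_Omega G ht))) rfl
  rw [show ω = ω' + (ω p / t p) • t by rw [hω', sub_add_cancel]]
  exact add_mem hmem (Submodule.smul_mem _ _ (Submodule.subset_span ht))

theorem span_trapImages (G : Dgraph V) :
    Submodule.span K (trapImages K G) = Omega K V G 3 :=
  le_antisymm (Submodule.span_le.2 (trapImages_subset_Omega G)) fun _ hω => mem_span_trapImages hω

end Spanning

theorem statement11 (K : Type*) [Field K] {V : Type*} (G : Dgraph V) :
    ∃ s : Set (EPath V 3 →₀ K),
      (∀ x ∈ s, ∃ (m : ℕ) (_ : 2 ≤ m) (f : DgraphMap (Trap m) G),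
          x = inducedMap K f.toFun 3 (tau K m)) ∧
      LinearIndependent K (Subtype.val : s → (EPath V 3 →₀ K)) ∧
      Submodule.span K s = Omega K V G 3 := by
  obtain ⟨s, hs, hspan, hli⟩ := exists_linearIndependent K (trapImages K G)
  exact ⟨s, fun x hx => hs hx, hli, hspan.trans (span_trapImages G)⟩
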